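/- arXiv:2504.16296 — 4 statements merged into one kernel-verified Lean document; each statement's English description precedes it below -/
import Mathlib

section
/- Let k, n be positive integers and c ≥ 1 a real number. Consider the planar system ẋ = y, ẏ = (x^k − c)·y + x·(x^n − 1). Then the system has no closed orbits: every periodic solution (x(s), y(s)) : ℝ → ℝ² of this system is constant. -/
/-!
Along a solution the energy `E = y²/2 + x²/2 − x^(n+2)/(n+2)` satisfies `E' = (x^k − c)·y²`.
On a periodic orbit the second-derivative test at the extrema of `x` gives `x ≤ 1`, and also
`x ≥ -1` when `n` is even. When `n` is odd, `x ≥ -c^(1/k)`: otherwise, running from a maximum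
of `x` (where `E ≤ 1/2`) to the first time `x` reaches `-c^(1/k)` (where `E > 1/2`), `E` would
increase although `x^k ≤ c` along the way. Hence `x^k ≤ c` throughout, so `E` is nonincreasing
and periodic, hence constant, and `(x^k − c)·y² ≡ 0`. Where `y ≠ 0` this forces `x^k = c`
locally, so `k·x^(k−1)·y = 0`, impossible as `y ≠ 0` and `x^k = c ≠ 0`. Thus `y ≡ 0` and `x` is constant.
-/

open Set Filter Topology Function

theorem IsLocalMax.second_deriv_nonpos {x y : ℝ → ℝ} {s₀ d : ℝ} (hmax : IsLocalMax x s₀)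
    (hx : ∀ s, HasDerivAt x (y s) s) (hy : HasDerivAt y d s₀) : d ≤ 0 := by
  have hderiv : deriv x = y := funext fun s => (hx s).deriv
  -- if `d > 0`, `s₀` is also a local minimum, so `x` is locally constant and `d = 0`
  by_contra! hd
  have hmin : IsLocalMin x s₀ := isLocalMin_of_deriv_deriv_pos (by rwa [hderiv, hy.deriv])
    (by rw [hderiv, hmax.hasDerivAt_eq_zero (hx s₀)]) (hx s₀).continuousAt
  have hconst : x =ᶠ[𝓝 s₀] fun _ => x s₀ := by
    filter_upwards [hmax, hmin] with s h₁ h₂ using le_antisymm h₁ h₂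
  have hy0 : y =ᶠ[𝓝 s₀] fun _ => 0 := by
    simpa [hderiv] using hconst.deriv
  exact hd.ne' ((hy.congr_of_eventuallyEq hy0.symm).unique (hasDerivAt_const s₀ 0))

theorem IsLocalMin.second_deriv_nonneg {x y : ℝ → ℝ} {s₀ d : ℝ} (hmin : IsLocalMin x s₀)
    (hx : ∀ s, HasDerivAt x (y s) s) (hy : HasDerivAt y d s₀) : 0 ≤ d := by
  simpa using hmin.neg.second_deriv_nonpos (fun s => (hx s).neg) hy.neg

theorem Function.Periodic.exists_forall_ge {β : Type*} [LinearOrder β] [TopologicalSpace β]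
    [ClosedIciTopology β] {f : ℝ → β} {T : ℝ} (hf : Periodic f T) (hT : T ≠ 0)
    (hc : Continuous f) : ∃ s₀, ∀ s, f s ≤ f s₀ := by
  obtain ⟨_, ⟨s₀, rfl⟩, hmax⟩ :=
    (hf.compact_of_continuous hT hc).exists_isGreatest (range_nonempty f)
  exact ⟨s₀, fun s => hmax ⟨s, rfl⟩⟩

theorem Function.Periodic.exists_forall_le {β : Type*} [LinearOrder β] [TopologicalSpace β]
    [ClosedIicTopology β] {f : ℝ → β} {T : ℝ} (hf : Periodic f T) (hT : T ≠ 0)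
    (hc : Continuous f) : ∃ s₀, ∀ s, f s₀ ≤ f s := by
  obtain ⟨_, ⟨s₀, rfl⟩, hmin⟩ :=
    (hf.compact_of_continuous hT hc).exists_isLeast (range_nonempty f)
  exact ⟨s₀, fun s => hmin ⟨s, rfl⟩⟩

theorem Function.Periodic.eq_of_antitone {α β : Type*} [AddCommGroup α] [LinearOrder α]
    [IsOrderedAddMonoid α] [Archimedean α] [PartialOrder β] {f : α → β} {T : α}
    (hf : Periodic f T) (hT : 0 < T) (hanti : Antitone f) (s t : α) : f t = f s := by
  obtain ⟨u, hu, htu⟩ := hf.exists_mem_Ico hT t s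
  rw [htu]
  exact le_antisymm (hanti hu.1) (hf s ▸ hanti hu.2.le)

theorem ContinuousOn.exists_first_le {f : ℝ → ℝ} {a b r : ℝ}
    (hf : ContinuousOn f (Icc a b)) (hab : a ≤ b) (hb : f b ≤ r) :
    ∃ s ∈ Icc a b, f s ≤ r ∧ ∀ u ∈ Ico a s, r < f u := by
  have hS : IsCompact (Icc a b ∩ f ⁻¹' Iic r) :=
    isCompact_Icc.of_isClosed_subset (hf.preimage_isClosed_of_isClosed isClosed_Icc isClosed_Iic)
      inter_subset_left
  obtain ⟨s, ⟨hs, hfs⟩, hleast⟩ := hS.exists_isLeast ⟨b, ⟨hab, le_rfl⟩, hb⟩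
  refine ⟨s, hs, hfs, fun u hu => ?_⟩
  by_contra! hfu
  exact (hu.2.trans_le (hleast ⟨⟨hu.1, hu.2.le.trans hs.2⟩, hfu⟩)).false

theorem pow_le_pow_of_abs_le {u ρ : ℝ} (h : |u| ≤ ρ) (k : ℕ) : u ^ k ≤ ρ ^ k :=
  calc u ^ k ≤ |u| ^ k := (le_abs_self _).trans (abs_pow u k).le
    _ ≤ ρ ^ k := pow_le_pow_left₀ (abs_nonneg u) h k

structure IsSolution (k n : ℕ) (c : ℝ) (x y : ℝ → ℝ) : Prop where
  hasDerivAt_fst : ∀ s, HasDerivAt x (y s) s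
  hasDerivAt_snd : ∀ s, HasDerivAt y ((x s ^ k - c) * y s + x s * (x s ^ n - 1)) s

noncomputable def energy (n : ℕ) (u v : ℝ) : ℝ :=
  v ^ 2 / 2 + u ^ 2 / 2 - u ^ (n + 2) / (n + 2)

theorem energy_zero_le_half {n : ℕ} {u : ℝ} (h₀ : 0 ≤ u) (h₁ : u ≤ 1) :
    energy n u 0 ≤ 1 / 2 := by
  have : u ^ 2 ≤ 1 := pow_le_one₀ h₀ h₁
  have : 0 ≤ u ^ (n + 2) / (n + 2) := by positivity
  simp only [energy]
  linarith

theorem half_lt_energy {n : ℕ} (hn : Odd n) {u : ℝ} (hu : u ≤ -1) (v : ℝ) :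
    1 / 2 < energy n u v := by
  have hsq : 1 ≤ u ^ 2 := by nlinarith
  have hpow : 1 ≤ (-u) ^ (n + 2) := one_le_pow₀ (by linarith)
  rw [(hn.add_even even_two).neg_pow] at hpow
  have : u ^ (n + 2) / (n + 2) < 0 := div_neg_of_neg_of_pos (by linarith) (by positivity)
  have : 0 ≤ v ^ 2 / 2 := by positivity
  simp only [energy]
  linarith

namespace IsSolution

variable {k n : ℕ} {c T : ℝ} {x y : ℝ → ℝ}

theorem continuous_fst (h : IsSolution k n c x y) : Continuous x :=
  continuous_iff_continuousAt.2 fun s => (h.hasDerivAt_fst s).continuousAt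

theorem continuous_snd (h : IsSolution k n c x y) : Continuous y :=
  continuous_iff_continuousAt.2 fun s => (h.hasDerivAt_snd s).continuousAt

theorem hasDerivAt_energy (h : IsSolution k n c x y) (s : ℝ) :
    HasDerivAt (fun s => energy n (x s) (y s)) ((x s ^ k - c) * y s ^ 2) s := by
  have hx := h.hasDerivAt_fst s
  have hy := h.hasDerivAt_snd s
  refine (((hy.pow 2).div_const 2).add ((hx.pow 2).div_const 2) |>.sub
    ((hx.pow (n + 2)).div_const ((n : ℝ) + 2))).congr_deriv ?_
  field_simp
  push_cast
  ring

theorem mul_sub_one_nonpos_of_isLocalMax (h : IsSolution k n c x y) {s : ℝ}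
    (hmax : IsLocalMax x s) : x s * (x s ^ n - 1) ≤ 0 := by
  simpa [hmax.hasDerivAt_eq_zero (h.hasDerivAt_fst s)] using
    hmax.second_deriv_nonpos h.hasDerivAt_fst (h.hasDerivAt_snd s)

theorem mul_sub_one_nonneg_of_isLocalMin (h : IsSolution k n c x y) {s : ℝ}
    (hmin : IsLocalMin x s) : 0 ≤ x s * (x s ^ n - 1) := by
  simpa [hmin.hasDerivAt_eq_zero (h.hasDerivAt_fst s)] using
    hmin.second_deriv_nonneg h.hasDerivAt_fst (h.hasDerivAt_snd s)

theorem le_one (h : IsSolution k n c x y) (hn : n ≠ 0) (hT : 0 < T) (hxper : Periodic x T)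
    (s : ℝ) : x s ≤ 1 := by
  obtain ⟨s₀, hmax⟩ := hxper.exists_forall_ge hT.ne' h.continuous_fst
  have hg := h.mul_sub_one_nonpos_of_isLocalMax (Eventually.of_forall hmax)
  refine (hmax s).trans (not_lt.1 fun h₁ => hg.not_gt ?_)
  exact mul_pos (by linarith) (sub_pos.2 (one_lt_pow₀ h₁ hn))

theorem neg_one_le_of_even (h : IsSolution k n c x y) (hn : n ≠ 0) (he : Even n) (hT : 0 < T)
    (hxper : Periodic x T) (s : ℝ) : -1 ≤ x s := by
  obtain ⟨s₀, hmin⟩ := hxper.exists_forall_le hT.ne' h.continuous_fst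
  have hg := h.mul_sub_one_nonneg_of_isLocalMin (Eventually.of_forall hmin)
  refine le_trans (not_lt.1 fun h₁ => hg.not_gt ?_) (hmin s)
  have : 1 < x s₀ ^ n := by
    rw [← he.pow_abs]
    exact one_lt_pow₀ (by rw [abs_of_neg (by linarith)]; linarith) hn
  exact mul_neg_of_neg_of_pos (by linarith) (sub_pos.2 this)

theorem neg_le_of_odd (h : IsSolution k n c x y) (hn : Odd n) {ρ : ℝ} (hρ : 1 ≤ ρ)
    (hρc : ρ ^ k ≤ c) (hT : 0 < T) (hxper : Periodic x T) (s : ℝ) : -ρ ≤ x s := by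
  by_contra! hs
  obtain ⟨s₀, hmax₀⟩ := hxper.exists_forall_ge hT.ne' h.continuous_fst
  obtain ⟨t, ht, hxt⟩ := hxper.exists_mem_Ioc hT s₀ (s - T)
  rw [sub_add_cancel] at ht
  have hmax : ∀ u, x u ≤ x t := hxt ▸ hmax₀
  have hxt₀ : 0 ≤ x t := by
    have hg := h.mul_sub_one_nonpos_of_isLocalMax (Eventually.of_forall hmax)
    refine not_lt.1 fun hneg => hg.not_gt (mul_pos_of_neg_of_neg hneg ?_)
    linarith [hn.pow_neg hneg]
  have hyt : y t = 0 :=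
    IsLocalMax.hasDerivAt_eq_zero (Eventually.of_forall hmax) (h.hasDerivAt_fst t)
  obtain ⟨s₁, hs₁, hxs₁, hfirst⟩ :=
    h.continuous_fst.continuousOn.exists_first_le (r := -ρ) ht.2 hs.le
  have hanti : AntitoneOn (fun s => energy n (x s) (y s)) (Icc t s₁) := by
    refine antitoneOn_of_hasDerivWithinAt_nonpos (convex_Icc t s₁)
      (fun u _ => (h.hasDerivAt_energy u).continuousAt.continuousWithinAt)
      (fun u _ => (h.hasDerivAt_energy u).hasDerivWithinAt) fun u hu => ?_
    rw [interior_Icc] at hu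
    have habs : |x u| ≤ ρ := abs_le.2 ⟨(hfirst u ⟨hu.1.le, hu.2⟩).le,
      (h.le_one hn.pos.ne' hT hxper u).trans hρ⟩
    exact mul_nonpos_of_nonpos_of_nonneg
      (sub_nonpos.2 ((pow_le_pow_of_abs_le habs k).trans hρc)) (sq_nonneg _)
  have hdecr := hanti ⟨le_rfl, hs₁.1⟩ ⟨hs₁.1, le_rfl⟩ hs₁.1
  have hlow := half_lt_energy hn (hxs₁.trans (neg_le_neg hρ)) (y s₁)
  have hup : energy n (x t) (y t) ≤ 1 / 2 :=
    hyt ▸ energy_zero_le_half hxt₀ (h.le_one hn.pos.ne' hT hxper t)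
  linarith

theorem pow_le (h : IsSolution k n c x y) (hk : k ≠ 0) (hn : n ≠ 0) (hc : 1 ≤ c) (hT : 0 < T)
    (hxper : Periodic x T) (s : ℝ) : x s ^ k ≤ c := by
  set ρ := c ^ (k : ℝ)⁻¹
  have hρ : 1 ≤ ρ := Real.one_le_rpow hc (by positivity)
  have hρc : ρ ^ k = c := Real.rpow_inv_natCast_pow (by linarith) hk
  have hlow : -ρ ≤ x s := by
    rcases Nat.even_or_odd n with he | ho
    · exact (neg_le_neg hρ).trans (h.neg_one_le_of_even hn he hT hxper s)
    · exact h.neg_le_of_odd ho hρ hρc.le hT hxper s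
  exact hρc ▸ pow_le_pow_of_abs_le (abs_le.2 ⟨hlow, (h.le_one hn hT hxper s).trans hρ⟩) k

theorem pow_sub_mul_sq_eq_zero (h : IsSolution k n c x y) (hT : 0 < T) (hxper : Periodic x T)
    (hyper : Periodic y T) (hbound : ∀ s, x s ^ k ≤ c) (s : ℝ) :
    (x s ^ k - c) * y s ^ 2 = 0 := by
  have hper : Periodic (fun s => energy n (x s) (y s)) T := fun s => by
    simp only [hxper s, hyper s]
  have hanti := antitone_of_hasDerivAt_nonpos h.hasDerivAt_energy fun s =>
    mul_nonpos_of_nonpos_of_nonneg (sub_nonpos.2 (hbound s)) (sq_nonneg _)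
  have hconst : (fun s => energy n (x s) (y s)) = fun _ => energy n (x 0) (y 0) :=
    funext (hper.eq_of_antitone hT hanti 0)
  exact (h.hasDerivAt_energy s).unique (hconst ▸ hasDerivAt_const s _)

end IsSolution

theorem eq_zero_of_pow_sub_mul_sq_eq_zero {x y : ℝ → ℝ} {k : ℕ} {c : ℝ}
    (hx : ∀ s, HasDerivAt x (y s) s) (hy : Continuous y) (hk : k ≠ 0) (hc : c ≠ 0)
    (h : ∀ s, (x s ^ k - c) * y s ^ 2 = 0) (s : ℝ) : y s = 0 := by
  by_contra hys
  have hlevel : (fun u => x u ^ k) =ᶠ[𝓝 s] fun _ => c := by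
    filter_upwards [hy.continuousAt.eventually_ne hys] with u hu
    simpa [hu, sub_eq_zero] using h u
  have hderiv := ((hx s).pow k).unique ((hasDerivAt_const s c).congr_of_eventuallyEq hlevel)
  obtain ⟨hxs, -⟩ : x s = 0 ∧ k - 1 ≠ 0 := by simpa [hk, hys] using hderiv
  exact hc (by simpa [hxs, hk] using hlevel.self_of_nhds.symm)

/-- For `c ≥ 1`, the planar system `ẋ = y`, `ẏ = (x^k − c)·y + x·(x^n − 1)` has no
closed orbits: every periodic solution is constant. -/
theorem no_closed_orbits (k n : ℕ) (hk : 0 < k) (hn : 0 < n) (c : ℝ) (hc : 1 ≤ c)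
    (x y : ℝ → ℝ)
    (hx : ∀ s : ℝ, HasDerivAt x (y s) s)
    (hy : ∀ s : ℝ, HasDerivAt y ((x s ^ k - c) * y s + x s * (x s ^ n - 1)) s)
    (T : ℝ) (hT : 0 < T)
    (hxper : Function.Periodic x T) (hyper : Function.Periodic y T) :
    ∀ s : ℝ, x s = x 0 ∧ y s = y 0 := by
  have h : IsSolution k n c x y := ⟨hx, hy⟩
  have hbound : ∀ s, x s ^ k ≤ c := h.pow_le hk.ne' hn.ne' hc hT hxper
  have hy₀ : ∀ s, y s = 0 := eq_zero_of_pow_sub_mul_sq_eq_zero hx h.continuous_snd hk.ne'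
    (by linarith : (0 : ℝ) < c).ne' (h.pow_sub_mul_sq_eq_zero hT hxper hyper hbound)
  have hx₀ : ∀ s, x s = x 0 := fun s =>
    is_const_of_deriv_eq_zero (fun u => (hx u).differentiableAt)
      (fun u => by rw [(hx u).deriv, hy₀ u]) s 0
  exact fun s => ⟨hx₀ s, by rw [hy₀ s, hy₀ 0]⟩
end

section
/- Let k ≥ 1 be an integer. If k is odd, then there exists a unique θ ∈ (π/2, π) such that cos(θ)^{k+1} = (k + 1)·sin(θ)^k. If k is even, then there exists a unique θ ∈ (3π/2, 2π) such that cos(θ)^{k+1} = (k + 1)·sin(θ)^k. -/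
/-!
The substitutions `θ = π - φ` (for odd `k`) and `θ = 2π - φ` (for even `k`) both turn the
equation into `cos φ ^ (k+1) = (k+1) * sin φ ^ k` with `φ ∈ (0, π/2)`, thanks to the parity of
the exponents. On `[0, π/2]` cosine decreases and sine increases, both nonnegative, so
`cos φ ^ (k+1) - (k+1) * sin φ ^ k` is strictly decreasing, from `1` at `0` to `-(k+1)` at `π/2`;
it has exactly one zero.
-/

open Real Set

theorem existsUnique_mem_Ioo_eq_of_strictAntiOn {α δ : Type*} [TopologicalSpace α]
    [ConditionallyCompleteLinearOrder α] [OrderTopology α] [DenselyOrdered α]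
    [LinearOrder δ] [TopologicalSpace δ] [OrderClosedTopology δ]
    {f : α → δ} {a b : α} {y : δ} (hab : a ≤ b) (hf : ContinuousOn f (Icc a b))
    (hanti : StrictAntiOn f (Icc a b)) (hb : f b < y) (ha : y < f a) :
    ∃! x, x ∈ Ioo a b ∧ f x = y := by
  obtain ⟨x, hx, hfx⟩ := intermediate_value_Ioo' hab hf ⟨hb, ha⟩
  refine ⟨x, ⟨hx, hfx⟩, fun x' ⟨hx', hfx'⟩ => ?_⟩
  exact hanti.injOn (Ioo_subset_Icc_self hx') (Ioo_subset_Icc_self hx) (hfx'.trans hfx.symm)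

theorem existsUnique_of_forall_iff_sub_left {G : Type*} [AddCommGroup G] {P Q : G → Prop} (c : G)
    (hP : ∃! x, P x) (hQ : ∀ x, Q x ↔ P (c - x)) : ∃! x, Q x := by
  rw [(Equiv.subLeft c).existsUnique_congr_left] at hP
  simpa [hQ, neg_add_eq_sub] using hP

theorem strictAntiOn_cos_pow_sub_mul_sin_pow {k : ℕ} (hk : k ≠ 0) :
    StrictAntiOn (fun φ => cos φ ^ (k + 1) - (k + 1) * sin φ ^ k) (Icc 0 (π / 2)) := by
  intro x hx y hy hxy
  have hπ := pi_pos
  have hcos : cos y ^ (k + 1) < cos x ^ (k + 1) := by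
    refine pow_lt_pow_left₀ ?_ (cos_nonneg_of_mem_Icc ⟨by linarith [hy.1], hy.2⟩)
      (Nat.succ_ne_zero k)
    exact strictAntiOn_cos ⟨hx.1, by linarith [hx.2]⟩ ⟨hy.1, by linarith [hy.2]⟩ hxy
  have hsin : sin x ^ k < sin y ^ k := by
    refine pow_lt_pow_left₀ ?_ (sin_nonneg_of_nonneg_of_le_pi hx.1 (by linarith [hx.2])) hk
    exact strictMonoOn_sin ⟨by linarith [hx.1], hx.2⟩ ⟨by linarith [hy.1], hy.2⟩ hxy
  have hk1 : (0 : ℝ) < k + 1 := by positivity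
  dsimp only
  linarith [mul_lt_mul_of_pos_left hsin hk1]

theorem existsUnique_cos_pow_eq_mul_sin_pow {k : ℕ} (hk : k ≠ 0) :
    ∃! φ, φ ∈ Ioo 0 (π / 2) ∧ cos φ ^ (k + 1) = (k + 1) * sin φ ^ k := by
  simp only [← sub_eq_zero (b := (_ : ℝ) * _)]
  refine existsUnique_mem_Ioo_eq_of_strictAntiOn (by positivity) (by fun_prop)
    (strictAntiOn_cos_pow_sub_mul_sin_pow hk) ?_ ?_
  · simp only [cos_pi_div_two, sin_pi_div_two, zero_pow (Nat.succ_ne_zero k), one_pow]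
    linarith [(Nat.cast_nonneg k : (0 : ℝ) ≤ k)]
  · simp [zero_pow hk]

/-- For `k ≥ 1`: if `k` is odd there is a unique `θ ∈ (π/2, π)` with
`cos(θ)^{k+1} = (k+1)·sin(θ)^k`, and if `k` is even there is a unique such
`θ ∈ (3π/2, 2π)`. -/
theorem unique_theta3 (k : ℕ) (hk : 1 ≤ k) :
    (Odd k → ∃! θ : ℝ, θ ∈ Set.Ioo (π / 2) π ∧
      Real.cos θ ^ (k + 1) = (k + 1 : ℝ) * Real.sin θ ^ k) ∧
    (Even k → ∃! θ : ℝ, θ ∈ Set.Ioo (3 * π / 2) (2 * π) ∧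
      Real.cos θ ^ (k + 1) = (k + 1 : ℝ) * Real.sin θ ^ k) := by
  have hφ := existsUnique_cos_pow_eq_mul_sin_pow (k := k) (by omega)
  refine ⟨fun hodd => existsUnique_of_forall_iff_sub_left π hφ fun θ => ?_,
    fun heven => existsUnique_of_forall_iff_sub_left (2 * π) hφ fun θ => ?_⟩
  · rw [cos_pi_sub, sin_pi_sub, hodd.add_one.neg_pow, mem_Ioo, mem_Ioo]
    constructor <;> rintro ⟨⟨h₁, h₂⟩, h⟩ <;>
      exact ⟨⟨by linarith, by linarith⟩, h⟩
  · rw [cos_two_pi_sub, sin_two_pi_sub, heven.neg_pow, mem_Ioo, mem_Ioo]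
    constructor <;> rintro ⟨⟨h₁, h₂⟩, h⟩ <;>
      exact ⟨⟨by linarith, by linarith⟩, h⟩
end

section
/- Let k ≥ 1 be an integer. The set of solutions θ ∈ [0, 2π) of the equation sin(θ)·(cos(θ)^{k+1} − (k + 1)·sin(θ)^k) = 0 is exactly {0, π, θ₁, θ₃}, where θ₁ is the unique solution of cos(θ)^{k+1} = (k + 1)·sin(θ)^k in (0, π/2), and θ₃ is the unique solution of cos(θ)^{k+1} = (k + 1)·sin(θ)^k in (π/2, π) if k is odd and in (3π/2, 2π) if k is even. In particular, the equation sin(θ)·(cos(θ)^{k+1} − (k + 1)·sin(θ)^k) = 0 has exactly four solutions in [0, 2π). -/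
/-!
The second factor `F k θ = cos θ ^ (k + 1) - (k + 1) * sin θ ^ k` is strictly decreasing on
`[0, π/2]`, so it has at most one zero there. Reflecting `θ ↦ π - θ` (for `k` odd)
or `θ ↦ 2π - θ` (for `k` even) leaves `F k` unchanged, and a sign count shows that every zero of
`F k` in `[0, 2π)` off the horizontal axis lies in `(0, π/2)` or in the mirror image of that
quadrant. Hence the zeros are `θ₁` and its mirror image, which must be `θ₃`.
-/

open Real Set

noncomputable def equilibriumFactor (k : ℕ) (θ : ℝ) : ℝ :=
  cos θ ^ (k + 1) - (k + 1) * sin θ ^ k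

noncomputable def reflectAngle (k : ℕ) (θ : ℝ) : ℝ :=
  if Even k then 2 * π - θ else π - θ

theorem strictAntiOn_equilibriumFactor (k : ℕ) :
    StrictAntiOn (equilibriumFactor k) (Icc 0 (π / 2)) := by
  intro a ha b hb hab
  have hcos : cos b ^ (k + 1) < cos a ^ (k + 1) :=
    pow_lt_pow_left₀
      (strictAntiOn_cos ⟨ha.1, by linarith [pi_pos, ha.2]⟩ ⟨hb.1, by linarith [pi_pos, hb.2]⟩ hab)
      (cos_nonneg_of_mem_Icc ⟨by linarith [pi_pos, hb.1], hb.2⟩) k.succ_ne_zero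
  have hsin : sin a ^ k ≤ sin b ^ k :=
    pow_le_pow_left₀ (sin_nonneg_of_nonneg_of_le_pi ha.1 (by linarith [pi_pos, ha.2]))
      ((strictMonoOn_sin.monotoneOn) ⟨by linarith [pi_pos, ha.1], ha.2⟩
        ⟨by linarith [pi_pos, hb.1], hb.2⟩ hab.le) k
  unfold equilibriumFactor
  linarith [mul_le_mul_of_nonneg_left hsin (by positivity : (0 : ℝ) ≤ k + 1)]

theorem injOn_equilibriumFactor (k : ℕ) : InjOn (equilibriumFactor k) (Ioo 0 (π / 2)) :=
  (strictAntiOn_equilibriumFactor k).injOn.mono Ioo_subset_Icc_self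

theorem equilibriumFactor_eq_zero_iff {k : ℕ} {θ : ℝ} :
    equilibriumFactor k θ = 0 ↔ cos θ ^ (k + 1) = (k + 1) * sin θ ^ k :=
  sub_eq_zero

theorem equilibriumFactor_reflectAngle (k : ℕ) (θ : ℝ) :
    equilibriumFactor k (reflectAngle k θ) = equilibriumFactor k θ := by
  unfold equilibriumFactor reflectAngle
  split_ifs with hk
  · simp [cos_two_pi_sub, sin_two_pi_sub, hk.neg_pow]
  · simp [cos_pi_sub, sin_pi_sub, (Nat.not_even_iff_odd.mp hk).add_one.neg_pow]

theorem reflectAngle_reflectAngle (k : ℕ) (θ : ℝ) : reflectAngle k (reflectAngle k θ) = θ := by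
  unfold reflectAngle
  split_ifs <;> ring

theorem eq_zero_or_eq_pi_of_sin_eq_zero {θ : ℝ} (hθ : θ ∈ Ico 0 (2 * π)) (h : sin θ = 0) :
    θ = 0 ∨ θ = π := by
  rcases lt_or_ge θ π with hlt | hge
  · exact .inl ((sin_eq_zero_iff_of_lt_of_lt (by linarith [pi_pos, hθ.1]) hlt).mp h)
  · have hshift : sin (θ - π) = 0 := by rw [sin_sub_pi, h, neg_zero]
    right
    linarith [(sin_eq_zero_iff_of_lt_of_lt (by linarith [pi_pos]) (by linarith [hθ.2])).mp hshift]

theorem lt_pi_of_sin_pos {θ : ℝ} (hθ : θ < 2 * π) (h : 0 < sin θ) : θ < π := by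
  by_contra! hge
  have := sin_nonpos_of_nonpos_of_neg_pi_le (x := θ - 2 * π) (by linarith) (by linarith)
  rw [sin_sub_two_pi] at this
  linarith

theorem cos_ne_zero_of_equilibriumFactor_eq_zero {k : ℕ} {θ : ℝ} (hsin : sin θ ≠ 0)
    (h : equilibriumFactor k θ = 0) : cos θ ≠ 0 := by
  intro hcos
  rw [equilibriumFactor, hcos, zero_pow k.succ_ne_zero, zero_sub, neg_eq_zero] at h
  exact hsin (eq_zero_of_pow_eq_zero ((mul_eq_zero.mp h).resolve_left (by positivity)))

theorem mem_Ioo_or_reflectAngle_mem_Ioo_of_equilibriumFactor_eq_zero {k : ℕ} {θ : ℝ}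
    (hθ : θ ∈ Ico 0 (2 * π)) (hsin : sin θ ≠ 0) (h : equilibriumFactor k θ = 0) :
    θ ∈ Ioo 0 (π / 2) ∨ reflectAngle k θ ∈ Ioo 0 (π / 2) := by
  have hθ0 : 0 < θ := hθ.1.lt_of_ne (by rintro rfl; exact hsin sin_zero)
  have hθpi2 : θ ≠ π / 2 := by
    rintro rfl; exact cos_ne_zero_of_equilibriumFactor_eq_zero hsin h cos_pi_div_two
  have heq := equilibriumFactor_eq_zero_iff.mp h
  unfold reflectAngle
  rcases Nat.even_or_odd k with hk | hk
  · have hcos : 0 < cos θ :=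
      hk.add_one.pow_pos_iff.mp (heq ▸ mul_pos (by positivity) (hk.pow_pos hsin))
    have hθ3pi2 : θ < π / 2 ∨ π + π / 2 < θ := by
      by_contra! hmid
      exact (cos_nonpos_of_pi_div_two_le_of_le (hmid.1.lt_of_ne' hθpi2).le hmid.2).not_gt hcos
    rw [if_pos hk]
    rcases hθ3pi2 with hlt | hgt
    · exact .inl ⟨hθ0, hlt⟩
    · exact .inr ⟨by linarith [hθ.2], by linarith⟩
  · have hsin_pow : 0 ≤ sin θ ^ k :=
      nonneg_of_mul_nonneg_right (heq ▸ hk.add_one.pow_nonneg _) (by positivity)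
    have hθpi : θ < π := lt_pi_of_sin_pos hθ.2 ((hk.pow_nonneg_iff.mp hsin_pow).lt_of_ne' hsin)
    rw [if_neg (Nat.not_even_iff_odd.mpr hk)]
    rcases hθpi2.lt_or_gt with hlt | hgt
    · exact .inl ⟨hθ0, hlt⟩
    · exact .inr ⟨by linarith, by linarith⟩

theorem eq_or_eq_reflectAngle_of_equilibriumFactor_eq_zero {k : ℕ} {θ φ : ℝ}
    (hφ : φ ∈ Ioo 0 (π / 2)) (hφF : equilibriumFactor k φ = 0) (hθ : θ ∈ Ico 0 (2 * π))
    (hsin : sin θ ≠ 0) (hθF : equilibriumFactor k θ = 0) :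
    θ = φ ∨ θ = reflectAngle k φ := by
  rcases mem_Ioo_or_reflectAngle_mem_Ioo_of_equilibriumFactor_eq_zero hθ hsin hθF with h | h
  · exact .inl (injOn_equilibriumFactor k h hφ (hθF.trans hφF.symm))
  · right
    rw [← injOn_equilibriumFactor k h hφ (by rw [equilibriumFactor_reflectAngle, hθF, hφF]),
      reflectAngle_reflectAngle]

theorem reflectAngle_mem_Ioo_of_mem_Ioo {k : ℕ} {θ : ℝ}
    (hθ : (Odd k → θ ∈ Ioo (π / 2) π) ∧ (Even k → θ ∈ Ioo (3 * π / 2) (2 * π))) :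
    reflectAngle k θ ∈ Ioo 0 (π / 2) := by
  unfold reflectAngle
  rcases Nat.even_or_odd k with hk | hk
  · obtain ⟨hlo, hhi⟩ := hθ.2 hk
    rw [if_pos hk]
    exact ⟨by linarith, by linarith⟩
  · obtain ⟨hlo, hhi⟩ := hθ.1 hk
    rw [if_neg (Nat.not_even_iff_odd.mpr hk)]
    exact ⟨by linarith, by linarith⟩

theorem reflectAngle_mem_of_mem_Ioo {k : ℕ} {φ : ℝ} (hφ : φ ∈ Ioo 0 (π / 2)) :
    reflectAngle k φ ∈ Ioo (π / 2) (2 * π) \ {π} := by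
  obtain ⟨hlo, hhi⟩ := hφ
  unfold reflectAngle
  split_ifs
  · exact ⟨⟨by linarith, by linarith⟩, by simp only [mem_singleton_iff]; linarith⟩
  · exact ⟨⟨by linarith, by linarith [pi_pos]⟩, by simp only [mem_singleton_iff]; linarith⟩

theorem blowup_equilibria_on_circle_general (k : ℕ) (θ₁ θ₃ : ℝ)
    (hθ₁mem : θ₁ ∈ Set.Ioo 0 (π / 2))
    (hθ₁eq : Real.cos θ₁ ^ (k + 1) = (k + 1 : ℝ) * Real.sin θ₁ ^ k)
    (hθ₃mem : (Odd k → θ₃ ∈ Set.Ioo (π / 2) π) ∧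
              (Even k → θ₃ ∈ Set.Ioo (3 * π / 2) (2 * π)))
    (hθ₃eq : Real.cos θ₃ ^ (k + 1) = (k + 1 : ℝ) * Real.sin θ₃ ^ k) :
    {θ : ℝ | θ ∈ Set.Ico 0 (2 * π) ∧
        Real.sin θ * (Real.cos θ ^ (k + 1) - (k + 1 : ℝ) * Real.sin θ ^ k) = 0} =
      {0, π, θ₁, θ₃} ∧
    ({0, π, θ₁, θ₃} : Set ℝ).ncard = 4 := by
  have hθ₁F := equilibriumFactor_eq_zero_iff.mpr hθ₁eq
  have hθ₃F := equilibriumFactor_eq_zero_iff.mpr hθ₃eq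
  have hθ₃ : θ₃ = reflectAngle k θ₁ := by
    rw [← reflectAngle_reflectAngle k θ₃, injOn_equilibriumFactor k
      (reflectAngle_mem_Ioo_of_mem_Ioo hθ₃mem) hθ₁mem
      (by rw [equilibriumFactor_reflectAngle, hθ₃F, hθ₁F])]
  obtain ⟨⟨hθ₃lo, hθ₃hi⟩, hθ₃pi⟩ : θ₃ ∈ Ioo (π / 2) (2 * π) \ {π} :=
    hθ₃ ▸ reflectAngle_mem_of_mem_Ioo hθ₁mem
  refine ⟨?_, ncard_eq_four.mpr ⟨0, π, θ₁, θ₃, pi_ne_zero.symm, hθ₁mem.1.ne, by linarith,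
    by linarith [hθ₁mem.2], Ne.symm hθ₃pi, by linarith [hθ₁mem.2], rfl⟩⟩
  ext θ
  constructor
  · rintro ⟨hθ, h⟩
    by_cases hsin : sin θ = 0
    · rcases eq_zero_or_eq_pi_of_sin_eq_zero hθ hsin with rfl | rfl <;> simp
    rcases eq_or_eq_reflectAngle_of_equilibriumFactor_eq_zero hθ₁mem hθ₁F hθ hsin
      ((mul_eq_zero.mp h).resolve_left hsin) with rfl | rfl <;> simp [hθ₃]
  · rintro (rfl | rfl | rfl | rfl)
    · exact ⟨⟨le_rfl, by linarith⟩, by simp⟩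
    · exact ⟨⟨pi_pos.le, by linarith⟩, by simp⟩
    · exact ⟨⟨hθ₁mem.1.le, by linarith [hθ₁mem.2]⟩, mul_eq_zero_of_right _ hθ₁F⟩
    · exact ⟨⟨by linarith, hθ₃hi⟩, mul_eq_zero_of_right _ hθ₃F⟩

/-- The solutions `θ ∈ [0, 2π)` of `sin(θ)·(cos(θ)^{k+1} − (k+1)·sin(θ)^k) = 0` are
exactly `{0, π, θ₁, θ₃}`, where `θ₁` is the solution of
`cos(θ)^{k+1} = (k+1)·sin(θ)^k` in `(0, π/2)` and `θ₃` is the one in `(π/2, π)` for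
`k` odd, respectively in `(3π/2, 2π)` for `k` even; in particular there are exactly
four solutions in `[0, 2π)`. -/
theorem blowup_equilibria_on_circle (k : ℕ) (hk : 1 ≤ k) (θ₁ θ₃ : ℝ)
    (hθ₁mem : θ₁ ∈ Set.Ioo 0 (π / 2))
    (hθ₁eq : Real.cos θ₁ ^ (k + 1) = (k + 1 : ℝ) * Real.sin θ₁ ^ k)
    (hθ₃mem : (Odd k → θ₃ ∈ Set.Ioo (π / 2) π) ∧
              (Even k → θ₃ ∈ Set.Ioo (3 * π / 2) (2 * π)))
    (hθ₃eq : Real.cos θ₃ ^ (k + 1) = (k + 1 : ℝ) * Real.sin θ₃ ^ k) :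
    {θ : ℝ | θ ∈ Set.Ico 0 (2 * π) ∧
        Real.sin θ * (Real.cos θ ^ (k + 1) - (k + 1 : ℝ) * Real.sin θ ^ k) = 0} =
      {0, π, θ₁, θ₃} ∧
    ({0, π, θ₁, θ₃} : Set ℝ).ncard = 4 :=
  blowup_equilibria_on_circle_general k θ₁ θ₃ hθ₁mem hθ₁eq hθ₃mem hθ₃eq
end

section
/- The set of solutions θ ∈ [0, 2π) of the equation sin(θ)·(cos(θ)⁴ + cos(θ)²·sin(θ) − 2·sin(θ)²) = 0 is exactly the six-element set {0, arcsin((√5 − 1)/2), π − arcsin((√5 − 1)/2), π, π − arcsin(1 − √2), 2π + arcsin(1 − √2)}. -/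
/-!
With `s = sin θ` and `cos² θ = 1 - s²` the equation factors as
`s (s² + s - 1) (s² - 2s - 1) = 0`, whose roots in `[-1, 1]` are `0`, `(√5 - 1)/2` and `1 - √2`.
Every `θ ∈ [0, 2π]` is one of `arcsin s`, `π - arcsin s`, `2π + arcsin s`, and the sign of `s`
decides which of these lie in `[0, 2π)`. The six resulting angles increase strictly.
-/

open Real

theorem Set.ncard_eq_six_of_lt {α : Type*} [Preorder α] {a b c d e f : α}
    (hab : a < b) (hbc : b < c) (hcd : c < d) (hde : d < e) (hef : e < f) :
    ({a, b, c, d, e, f} : Set α).ncard = 6 := by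
  rw [Set.ncard_insert_of_notMem, Set.ncard_insert_of_notMem, Set.ncard_insert_of_notMem,
    Set.ncard_insert_of_notMem, Set.ncard_insert_of_notMem, Set.ncard_singleton]
  all_goals simp only [Set.mem_insert_iff, Set.mem_singleton_iff]; grind [lt_irrefl, lt_trans]

theorem quartic_eq_mul_of_sq_add_sq_eq_one {s c : ℝ} (h : s ^ 2 + c ^ 2 = 1) :
    c ^ 4 + c ^ 2 * s - 2 * s ^ 2 = (s ^ 2 + s - 1) * (s ^ 2 - 2 * s - 1) := by
  linear_combination (c ^ 2 + 1 - s ^ 2 + s) * h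

theorem sq_add_self_sub_one_eq_zero_iff {s : ℝ} (hs : -1 ≤ s) :
    s ^ 2 + s - 1 = 0 ↔ s = (√5 - 1) / 2 := by
  have h5 : √5 ^ 2 = 5 := sq_sqrt (by norm_num)
  have hfactor : s ^ 2 + s - 1 = (s - (√5 - 1) / 2) * (s + (√5 + 1) / 2) := by
    linear_combination (1 / 4 : ℝ) * h5
  have hpos : 0 < s + (√5 + 1) / 2 := by
    linarith [lt_sqrt_of_sq_lt (by norm_num : (1 : ℝ) ^ 2 < 5)]
  rw [hfactor, mul_eq_zero, sub_eq_zero, or_iff_left hpos.ne']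

theorem sq_sub_two_mul_sub_one_eq_zero_iff {s : ℝ} (hs : s ≤ 1) :
    s ^ 2 - 2 * s - 1 = 0 ↔ s = 1 - √2 := by
  have h2 : √2 ^ 2 = 2 := sq_sqrt (by norm_num)
  have hfactor : s ^ 2 - 2 * s - 1 = (s - (1 - √2)) * (s - (1 + √2)) := by
    linear_combination h2
  have hneg : s - (1 + √2) < 0 := by linarith [sqrt_pos.2 (two_pos : (0 : ℝ) < 2)]
  rw [hfactor, mul_eq_zero, sub_eq_zero, or_iff_left hneg.ne]

theorem sin_mul_cos_pow_four_add_eq_zero_iff (θ : ℝ) :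
    sin θ * (cos θ ^ 4 + cos θ ^ 2 * sin θ - 2 * sin θ ^ 2) = 0 ↔
      sin θ = 0 ∨ sin θ = (√5 - 1) / 2 ∨ sin θ = 1 - √2 := by
  rw [quartic_eq_mul_of_sq_add_sq_eq_one (sin_sq_add_cos_sq θ), mul_eq_zero, mul_eq_zero,
    sq_add_self_sub_one_eq_zero_iff (neg_one_le_sin θ),
    sq_sub_two_mul_sub_one_eq_zero_iff (sin_le_one θ)]

theorem eq_arcsin_sin_or_eq_pi_sub_arcsin_sin {θ : ℝ} (h0 : 0 ≤ θ) (hπ : θ ≤ π) :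
    θ = arcsin (sin θ) ∨ θ = π - arcsin (sin θ) := by
  rcases le_total θ (π / 2) with h | h
  · exact Or.inl (arcsin_sin (by linarith [pi_pos]) h).symm
  · have := arcsin_sin (x := π - θ) (by linarith) (by linarith)
    rw [sin_pi_sub] at this
    exact Or.inr (by linarith)

theorem eq_arcsin_sin_or_eq_pi_sub_or_eq_two_pi_add {θ : ℝ} (h0 : 0 ≤ θ) (h2π : θ ≤ 2 * π) :
    θ = arcsin (sin θ) ∨ θ = π - arcsin (sin θ) ∨ θ = 2 * π + arcsin (sin θ) := by
  rcases le_total θ π with h | h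
  · exact (eq_arcsin_sin_or_eq_pi_sub_arcsin_sin h0 h).imp_right Or.inl
  · have := eq_arcsin_sin_or_eq_pi_sub_arcsin_sin (θ := θ - π) (by linarith) (by linarith)
    rw [sin_sub_pi, arcsin_neg] at this
    exact Or.inr (this.imp (fun h => by linarith) (fun h => by linarith))

/-- The solutions `θ ∈ [0, 2π)` of
`sin(θ)·(cos⁴(θ) + cos²(θ)·sin(θ) − 2·sin²(θ)) = 0` form exactly the six-element set
`{0, arcsin((√5−1)/2), π − arcsin((√5−1)/2), π, π − arcsin(1−√2), 2π + arcsin(1−√2)}`. -/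
theorem blowup_equilibria_n2_k1 :
    {θ : ℝ | θ ∈ Set.Ico 0 (2 * π) ∧
        Real.sin θ * (Real.cos θ ^ 4 + Real.cos θ ^ 2 * Real.sin θ
          - 2 * Real.sin θ ^ 2) = 0} =
      {0, Real.arcsin ((Real.sqrt 5 - 1) / 2), π - Real.arcsin ((Real.sqrt 5 - 1) / 2),
        π, π - Real.arcsin (1 - Real.sqrt 2), 2 * π + Real.arcsin (1 - Real.sqrt 2)} ∧
    ({0, Real.arcsin ((Real.sqrt 5 - 1) / 2), π - Real.arcsin ((Real.sqrt 5 - 1) / 2),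
        π, π - Real.arcsin (1 - Real.sqrt 2), 2 * π + Real.arcsin (1 - Real.sqrt 2)} :
      Set ℝ).ncard = 6 := by
  have h5 : 2 < √5 ∧ √5 < 3 :=
    ⟨lt_sqrt_of_sq_lt (by norm_num), (sqrt_lt' (by norm_num)).2 (by norm_num)⟩
  have h2 : 1 < √2 ∧ √2 < 2 :=
    ⟨lt_sqrt_of_sq_lt (by norm_num), (sqrt_lt' (by norm_num)).2 (by norm_num)⟩
  have hA : 0 < arcsin ((√5 - 1) / 2) ∧ arcsin ((√5 - 1) / 2) < π / 2 :=
    ⟨arcsin_pos.2 (by linarith), arcsin_lt_pi_div_two.2 (by linarith)⟩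
  have hB : -(π / 2) < arcsin (1 - √2) ∧ arcsin (1 - √2) < 0 :=
    ⟨neg_pi_div_two_lt_arcsin.2 (by linarith), arcsin_lt_zero.2 (by linarith)⟩
  have hπ := pi_pos
  refine ⟨?_, Set.ncard_eq_six_of_lt (by linarith) (by linarith) (by linarith) (by linarith)
    (by linarith)⟩
  ext θ
  simp only [Set.mem_ofPred_eq, Set.mem_Ico, Set.mem_insert_iff, Set.mem_singleton_iff,
    sin_mul_cos_pow_four_add_eq_zero_iff]
  constructor
  · rintro ⟨⟨h0, h2π⟩, hs⟩
    rcases eq_arcsin_sin_or_eq_pi_sub_or_eq_two_pi_add h0 h2π.le with h | h | h <;>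
      rcases hs with hs | hs | hs <;> simp only [hs, arcsin_zero] at h <;>
      first | (exfalso; linarith) | simp [h]
  · rintro (rfl | rfl | rfl | rfl | rfl | rfl) <;> refine ⟨⟨by linarith, by linarith⟩, ?_⟩ <;>
      simp [add_comm (2 * π), sin_add_two_pi, sin_pi_sub,
        sin_arcsin (x := (√5 - 1) / 2) (by linarith) (by linarith),
        sin_arcsin (x := 1 - √2) (by linarith) (by linarith)]
end
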